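/- Suppose the presentation ⟨X|R⟩ is side-confluent. For all integers n ≥ 1 and m ≥ l_N(n), the operators F_1^{n,m} and F_1^{n−1,m} ∨ F_2^{n−1,m} commute, where F_1^{n−1,m} ∨ F_2^{n−1,m} is the unique reduction operator relative to X^(m) with kernel ker(F_1^{n−1,m}) ∩ ker(F_2^{n−1,m}). More precisely, F_1^{n,m} commutes with F_2^{n−1,m}, and F_1^{n,m}∘F_1^{n−1,m} = F_1^{n−1,m}∘F_1^{n,m} = F_1^{n−1,m}. -/

import Mathlib

open scoped TensorProduct
set_option linter.unusedSectionVars false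

def altProd {A : Type*} [Monoid A] (t s : A) (k : ℕ) : A :=
  if Even k then (t * s) ^ (k / 2) else s * (t * s) ^ (k / 2)

namespace CC

variable (K : Type*) [Field K] (X : Type*) [Fintype X] [LinearOrder X]

abbrev F : Type _ := MonoidAlgebra K (FreeMonoid X)

noncomputable def wd (w : FreeMonoid X) : F K X := MonoidAlgebra.of K (FreeMonoid X) w

def wlen (w : FreeMonoid X) : ℕ := (FreeMonoid.toList w).length

noncomputable instance : LinearOrder (FreeMonoid X) :=
  LinearOrder.lift' (fun w => FreeMonoid.toList w) (fun _ _ h => FreeMonoid.toList.injective h)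

noncomputable def lm (f : F K X) : FreeMonoid X := WithBot.unbotD 1 (f.coeff.support.max)

/-- The homogeneous component `V^{⊗m} = KX^{(m)}` of `K⟨X⟩`:
elements supported on words of length `m`. -/
noncomputable def degSub (m : ℕ) : Submodule K (F K X) where
  carrier := {f | ∀ w ∈ f.coeff.support, wlen X w = m}
  add_mem' := by
    intro a b ha hb w hw
    have hw' : w ∈ (a.coeff + b.coeff).support := hw
    rcases Finset.mem_union.mp (Finsupp.support_add hw') with h | h
    · exact ha w h
    · exact hb w h
  zero_mem' := by intro w hw; simp at hw
  smul_mem' := by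
    intro c f hf w hw
    have hw' : w ∈ (c • f.coeff).support := hw
    exact hf w (Finsupp.support_smul hw')

lemma mem_degSub {m : ℕ} {f : F K X} :
    f ∈ degSub K X m ↔ ∀ w ∈ f.coeff.support, wlen X w = m := Iff.rfl

/-- `l_N(2k) = kN`, `l_N(2k+1) = kN + 1`. -/
def lN (N n : ℕ) : ℕ := if Even n then (n / 2) * N else (n / 2) * N + 1

/-- The homogeneous component `I(R)_m` of the two-sided ideal generated by `R`:
`I(R)_m = Σ_{i=0}^{m−N} V^{⊗i}·R̄·V^{⊗m−N−i}` for `m ≥ N` and `I(R)_m = 0` for `m < N`. -/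
noncomputable def idealPiece (N : ℕ) (R : Set (F K X)) (m : ℕ) : Submodule K (F K X) :=
  if m < N then ⊥
  else ⨆ i ∈ Finset.range (m - N + 1),
    degSub K X i * Submodule.span K R * degSub K X (m - N - i)

/-- The two-sided ideal `I(R)` of `K⟨X⟩` generated by `R`, as a `K`-subspace. -/
noncomputable def idealSpan (R : Set (F K X)) : Submodule K (F K X) :=
  Submodule.span K {x | ∃ u v : FreeMonoid X, ∃ g ∈ R, x = wd K X u * g * wd K X v}

/-- `J_0 = K`, `J_1 = V`, and `J_n = ⋂_{i=0}^{l_N(n)−N} V^{⊗i}·R̄·V^{⊗l_N(n)−N−i}` for `n ≥ 2`. -/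
noncomputable def Jspace (N : ℕ) (R : Set (F K X)) : ℕ → Submodule K (F K X)
  | 0 => degSub K X 0
  | 1 => degSub K X 1
  | (n + 2) => ⨅ i ∈ Finset.range (lN N (n + 2) - N + 1),
      degSub K X i * Submodule.span K R * degSub K X (lN N (n + 2) - N - i)

open Classical in
/-- The reduction `r_{u·g·v}` of the presentation `⟨X|R⟩`: the linear endomorphism of `K⟨X⟩`
fixing every word other than `u·lm(g)·v` and sending `u·lm(g)·v` to `u·(lm(g)−g)·v`. -/
noncomputable def redMap (u : FreeMonoid X) (g : F K X) (v : FreeMonoid X) :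
    F K X →ₗ[K] F K X :=
  Finsupp.linearCombination K (fun w : FreeMonoid X =>
    if w = u * lm K X g * v then wd K X u * (wd K X (lm K X g) - g) * wd K X v
    else wd K X w) ∘ₗ
    (MonoidAlgebra.coeffLinearEquiv K).toLinearMap

/-- `f` is a normal form for `⟨X|R⟩` if it is fixed by every reduction. -/
def IsNormalForm (R : Set (F K X)) (f : F K X) : Prop :=
  ∀ u v : FreeMonoid X, ∀ g ∈ R, redMap K X u g v f = f

/-- `g` is a normal form of `f`: `g` is a normal form and is obtained from `f` by applying a
finite sequence of reductions of `⟨X|R⟩`. -/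
def NormalFormOf (R : Set (F K X)) (f g : F K X) : Prop :=
  IsNormalForm K X R g ∧
    ∃ L : List (FreeMonoid X × F K X × FreeMonoid X),
      (∀ p ∈ L, p.2.1 ∈ R) ∧
      g = L.foldr (fun p h => redMap K X p.1 p.2.1 p.2.2 h) f

/-- The presentation `⟨X|R⟩` is reduced: for every `f ∈ R`, `lm(f) − f` is a normal form for
`⟨X|R⟩` and `lm(f)` is a normal form for `⟨X | R∖{f}⟩`. -/
def Reduced (R : Set (F K X)) : Prop :=
  ∀ f ∈ R, IsNormalForm K X R (wd K X (lm K X f) - f) ∧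
    IsNormalForm K X (R \ {f}) (wd K X (lm K X f))

/-- `R` consists of `N`-homogeneous elements with leading coefficient `1`. -/
def NHomogLC1 (N : ℕ) (R : Set (F K X)) : Prop :=
  ∀ f ∈ R, f ∈ degSub K X N ∧ f.coeff (lm K X f) = 1

open Classical in
/-- The operator `S` of the presentation `⟨X|R⟩`: the endomorphism of `V^{⊗N}` sending `lm(f)`
to `lm(f) − f` for every `f ∈ R` and fixing all other words (extended by the identity on words
of other lengths). -/
noncomputable def Sop (R : Set (F K X)) : F K X →ₗ[K] F K X :=
  Finsupp.linearCombination K (fun w : FreeMonoid X =>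
    if h : ∃ f ∈ R, lm K X f = w then wd K X w - h.choose else wd K X w) ∘ₗ
    (MonoidAlgebra.coeffLinearEquiv K).toLinearMap

/-- `S ⊗ id_{V^{⊗b}}` realized on `K⟨X⟩`: on a word of length `a + b`, apply `S` to the first
`a` letters and the identity to the last `b` letters; the identity on all other words. -/
noncomputable def applyLeft (S : F K X →ₗ[K] F K X) (a b : ℕ) : F K X →ₗ[K] F K X :=
  Finsupp.linearCombination K (fun w : FreeMonoid X =>
    if wlen X w = a + b then
      S (wd K X (FreeMonoid.ofList ((FreeMonoid.toList w).take a))) *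
        wd K X (FreeMonoid.ofList ((FreeMonoid.toList w).drop a))
    else wd K X w) ∘ₗ
    (MonoidAlgebra.coeffLinearEquiv K).toLinearMap

/-- `id_{V^{⊗a}} ⊗ S` realized on `K⟨X⟩`: on a word of length `a + b`, apply the identity to
the first `a` letters and `S` to the last `b` letters; the identity on all other words. -/
noncomputable def applyRight (S : F K X →ₗ[K] F K X) (a b : ℕ) : F K X →ₗ[K] F K X :=
  Finsupp.linearCombination K (fun w : FreeMonoid X =>
    if wlen X w = a + b then
      wd K X (FreeMonoid.ofList ((FreeMonoid.toList w).take a)) *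
        S (wd K X (FreeMonoid.ofList ((FreeMonoid.toList w).drop a)))
    else wd K X w) ∘ₗ
    (MonoidAlgebra.coeffLinearEquiv K).toLinearMap

/-- The presentation `⟨X|R⟩` is side-confluent: for every `1 ≤ m ≤ N−1` there exists `k ≥ 1`
with `⟨id_{V^{⊗m}}⊗S, S⊗id_{V^{⊗m}}⟩^k = ⟨S⊗id_{V^{⊗m}}, id_{V^{⊗m}}⊗S⟩^k` on `V^{⊗N+m}`. -/
def SideConfluent (N : ℕ) (R : Set (F K X)) : Prop :=
  ∀ m : ℕ, 1 ≤ m → m ≤ N - 1 →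
    ∃ k : ℕ, 1 ≤ k ∧
      ∀ f ∈ degSub K X (N + m),
        altProd (applyRight K X (Sop K X R) m N) (applyLeft K X (Sop K X R) N m) k f =
          altProd (applyLeft K X (Sop K X R) N m) (applyRight K X (Sop K X R) m N) k f

/-- The extra-condition: `(V^{⊗n}⊗R̄) ∩ (R̄⊗V^{⊗n}) ⊆ V^{⊗n−1}⊗R̄⊗V` for every `2 ≤ n ≤ N−1`. -/
def ExtraCondition (N : ℕ) (R : Set (F K X)) : Prop :=
  ∀ n : ℕ, 2 ≤ n → n ≤ N - 1 →
    (degSub K X n * Submodule.span K R) ⊓ (Submodule.span K R * degSub K X n) ≤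
      degSub K X (n - 1) * Submodule.span K R * degSub K X 1

/-- A reduction operator relative to `X^{(m)}`, realized as a linear endomorphism of `K⟨X⟩`
extended by the identity outside of `V^{⊗m}`: an idempotent operator fixing each word of
length `m` or mapping it to an element of `V^{⊗m}` all of whose monomials are strictly
smaller. -/
structure IsRedOp (m : ℕ) (T : F K X →ₗ[K] F K X) : Prop where
  idem : T ∘ₗ T = T
  le : ∀ w : FreeMonoid X, wlen X w = m →
    T (wd K X w) = wd K X w ∨
      (T (wd K X w) ∈ degSub K X m ∧ ∀ u ∈ (T (wd K X w)).coeff.support, u < w)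
  other : ∀ w : FreeMonoid X, wlen X w ≠ m → T (wd K X w) = wd K X w

/-- The kernel `I(R)_{m−l_N(n)} ⊗ V^{⊗l_N(n)}` of the reduction operator `F_1^{n,m}`. -/
noncomputable def ker1 (N : ℕ) (R : Set (F K X)) (n m : ℕ) : Submodule K (F K X) :=
  idealPiece K X N R (m - lN N n) * degSub K X (lN N n)

/-- The kernel of the reduction operator `F_2^{n,m}`: `⊥` if `m < l_N(n+1)` (so that
`F_2^{n,m} = id`), and `V^{⊗m−l_N(n+1)} ⊗ J_{n+1}` otherwise. -/
noncomputable def ker2 (N : ℕ) (R : Set (F K X)) (n m : ℕ) : Submodule K (F K X) :=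
  if m < lN N (n + 1) then ⊥
  else degSub K X (m - lN N (n + 1)) * Jspace K X N R (n + 1)

/-- The span of the normal words of length `d`, i.e. `φ(V^{⊗d})` where `φ` is the
normal-form map. -/
noncomputable def nfSub (R : Set (F K X)) (d : ℕ) : Submodule K (F K X) :=
  Submodule.span K
    {x | ∃ w : FreeMonoid X, wlen X w = d ∧ IsNormalForm K X R (wd K X w) ∧ x = wd K X w}

/-- `Γ = (id − T2)·Σ_{i odd, 1 ≤ i ≤ k−1} ⟨T2,T1⟩^i`, the image of the element `γ1` of the
confluence algebra under the `(T1,T2)`-representation. -/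
noncomputable def Gamma (T1 T2 : F K X →ₗ[K] F K X) (k : ℕ) : F K X →ₗ[K] F K X :=
  (1 - T2) * ∑ i ∈ (Finset.Icc 1 (k - 1)).filter (fun i => Odd i), altProd T2 T1 i

end CC

/-!
A reduction operator is determined by its kernel: its non-fixed words are exactly the leading
words of the kernel elements. Put `l = l_N(n)`. The kernel `I(R)_{m-l} ⊗ V^{⊗l}` of `F_1^{n,m}`
makes the fixedness of a word `x y` (with `|y| = l`) depend on `x` only, and `F_1^{n,m}` acts as
`G ⊗ id`; the kernel `V^{⊗m-l} ⊗ J_n` of `F_2^{n-1,m}` makes it depend on `y` only. So each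
operator preserves the image and the kernel of the other, and they commute. As
`ker F_1^{n,m} ⊆ ker F_1^{n-1,m}`, the absorption identities follow, and `F_1^{n,m}` preserves
`ker F_1^{n-1,m} ∩ ker F_2^{n-1,m}`; it also preserves the image of the join, because a word that
neither `F_1^{n,m}` nor `F_2^{n-1,m}` fixes is the leading word of a product `a b`, with `a` in
`I(R)_{m-l}` and `b` in `J_n`, that lies in both kernels.
-/

namespace CC

variable {K : Type*} [Field K] {X : Type*} [Fintype X] [LinearOrder X]

section Words

lemma wlen_mul (u v : FreeMonoid X) : wlen X (u * v) = wlen X u + wlen X v := by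
  simp [wlen]

lemma exists_mul_eq_of_wlen_eq_add {w : FreeMonoid X} {p q : ℕ} (h : wlen X w = p + q) :
    ∃ u v : FreeMonoid X, w = u * v ∧ wlen X u = p ∧ wlen X v = q := by
  refine ⟨.ofList (w.toList.take p), .ofList (w.toList.drop p), ?_, ?_, ?_⟩
  · rw [← FreeMonoid.ofList_append, List.take_append_drop, FreeMonoid.ofList_toList]
  all_goals simp_all [wlen]

lemma eq_and_eq_of_mul_eq_mul {u x v y : FreeMonoid X} (hlen : wlen X u = wlen X x)
    (h : u * v = x * y) : u = x ∧ v = y := by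
  have := List.append_inj (congrArg FreeMonoid.toList h) hlen
  exact ⟨FreeMonoid.toList.injective this.1, FreeMonoid.toList.injective this.2⟩

lemma eq_and_eq_of_mul_eq_mul_right {u x v y : FreeMonoid X} (hlen : wlen X v = wlen X y)
    (h : u * v = x * y) : u = x ∧ v = y := by
  have := congrArg (wlen X) h
  simp only [wlen_mul] at this
  exact eq_and_eq_of_mul_eq_mul (by omega) h

lemma mul_lt_mul_of_lt_of_wlen_eq {u x : FreeMonoid X} (h : u < x)
    (hlen : wlen X u = wlen X x) (v y : FreeMonoid X) : u * v < x * y := by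
  change List.Lex (· < ·) (u.toList ++ v.toList) (x.toList ++ y.toList)
  change List.Lex (· < ·) u.toList x.toList at h
  unfold wlen at hlen
  generalize u.toList = s, x.toList = t at h hlen
  induction h with
  | nil => simp at hlen
  | rel h => exact .rel h
  | cons _ ih => exact .cons (ih (by simpa using hlen))

lemma mul_lt_mul_left_word (u : FreeMonoid X) {v y : FreeMonoid X} (h : v < y) :
    u * v < u * y :=
  List.append_left_lt h

lemma le_of_mul_le_mul_of_wlen_eq {u x v y : FreeMonoid X} (hlen : wlen X u = wlen X x)
    (h : u * v ≤ x * y) : u ≤ x :=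
  not_lt.mp fun hlt => h.not_gt (mul_lt_mul_of_lt_of_wlen_eq hlt hlen.symm y v)

lemma le_of_mul_le_mul_left_word {u v y : FreeMonoid X} (h : u * v ≤ u * y) : v ≤ y :=
  not_lt.mp fun hlt => h.not_gt (mul_lt_mul_left_word u hlt)

lemma mul_le_mul_of_wlen_eq {u x v y : FreeMonoid X} (hlen : wlen X u = wlen X x)
    (hu : u ≤ x) (hv : v ≤ y) : u * v ≤ x * y := by
  rcases hu.lt_or_eq with hu | rfl
  · exact (mul_lt_mul_of_lt_of_wlen_eq hu hlen v y).le
  rcases hv.lt_or_eq with hv | rfl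
  · exact (mul_lt_mul_left_word u hv).le
  · exact le_rfl

end Words

section Polynomials

lemma wd_eq_single (w : FreeMonoid X) : wd K X w = MonoidAlgebra.single w 1 := rfl

lemma coeff_wd (w u : FreeMonoid X) : (wd K X w).coeff u = if w = u then 1 else 0 :=
  Finsupp.single_apply

lemma support_wd (w : FreeMonoid X) : (wd K X w).coeff.support = {w} :=
  Finsupp.support_single w one_ne_zero

lemma wd_mem_degSub {w : FreeMonoid X} {d : ℕ} (h : wlen X w = d) : wd K X w ∈ degSub K X d := by
  intro u hu
  rw [support_wd, Finset.mem_singleton] at hu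
  rwa [hu]

lemma wd_ne_zero (w : FreeMonoid X) : wd K X w ≠ 0 :=
  MonoidAlgebra.single_ne_zero.mpr one_ne_zero

lemma wd_mul (u v : FreeMonoid X) : wd K X (u * v) = wd K X u * wd K X v :=
  map_mul (MonoidAlgebra.of K (FreeMonoid X)) u v

lemma exists_mul_eq_of_mem_support_mul_wd {g : F K X} {y w : FreeMonoid X}
    (hw : w ∈ (g * wd K X y).coeff.support) : ∃ u ∈ g.coeff.support, u * y = w := by
  classical
  exact Finset.mem_image.mp (MonoidAlgebra.support_coeff_mul_single_subset g 1 y hw)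

lemma sum_smul_wd (f : F K X) : (f.coeff.sum fun w c => c • wd K X w) = f := by
  conv_rhs => rw [← MonoidAlgebra.sum_coeff_single f]
  refine Finsupp.sum_congr fun w _ => ?_
  rw [wd_eq_single, MonoidAlgebra.smul_single', mul_one]

lemma apply_eq_apply_of_forall_mem_support (L L' : F K X →ₗ[K] F K X) {f : F K X}
    (h : ∀ w ∈ f.coeff.support, L (wd K X w) = L' (wd K X w)) : L f = L' f := by
  rw [← sum_smul_wd f, map_finsuppSum, map_finsuppSum]
  exact Finsupp.sum_congr fun w hw => by rw [map_smul, map_smul, h w hw]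

lemma lm_eq_max' {f : F K X} (hf : f.coeff.support.Nonempty) :
    lm K X f = f.coeff.support.max' hf := by
  rw [lm, ← Finset.coe_max' hf, WithBot.unbotD_coe]

lemma lm_mem_support {f : F K X} (hf : f ≠ 0) : lm K X f ∈ f.coeff.support := by
  have hne : f.coeff.support.Nonempty := by simpa using hf
  rw [lm_eq_max' hne]
  exact Finset.max'_mem _ _

lemma coeff_lm_ne_zero {f : F K X} (hf : f ≠ 0) : f.coeff (lm K X f) ≠ 0 :=
  Finsupp.mem_support_iff.mp (lm_mem_support hf)

lemma le_lm {f : F K X} {w : FreeMonoid X} (hw : w ∈ f.coeff.support) : w ≤ lm K X f := by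
  rw [lm_eq_max' ⟨w, hw⟩]
  exact Finset.le_max' _ _ hw

lemma lm_eq_of_forall_le {f : F K X} {w : FreeMonoid X} (hw : w ∈ f.coeff.support)
    (hmax : ∀ u ∈ f.coeff.support, u ≤ w) : lm K X f = w :=
  (hmax _ (lm_mem_support (by rintro rfl; simp at hw))).antisymm (le_lm hw)

lemma lm_wd (w : FreeMonoid X) : lm K X (wd K X w) = w :=
  lm_eq_of_forall_le (by simp [support_wd]) fun u hu => by
    rw [support_wd, Finset.mem_singleton] at hu
    exact hu.le

lemma apply_eq_self_of_forall_mem_support (T : F K X →ₗ[K] F K X) {f : F K X}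
    (h : ∀ w ∈ f.coeff.support, T (wd K X w) = wd K X w) : T f = f :=
  apply_eq_apply_of_forall_mem_support T LinearMap.id h

end Polynomials

section Homogeneous

lemma degSub_mul_degSub_le (p q : ℕ) : degSub K X p * degSub K X q ≤ degSub K X (p + q) := by
  classical
  rw [Submodule.mul_le]
  intro a ha b hb w hw
  obtain ⟨u, hu, v, hv, rfl⟩ := Finset.mem_mul.mp (MonoidAlgebra.support_coeff_mul_subset a b hw)
  rw [wlen_mul, ha u hu, hb v hv]

lemma degSub_add_le_mul (p q : ℕ) : degSub K X (p + q) ≤ degSub K X p * degSub K X q := by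
  intro f hf
  rw [← sum_smul_wd f]
  refine Submodule.sum_mem _ fun w hw => Submodule.smul_mem _ _ ?_
  obtain ⟨u, v, rfl, hu, hv⟩ := exists_mul_eq_of_wlen_eq_add (hf w hw)
  rw [wd_mul]
  exact Submodule.mul_mem_mul (wd_mem_degSub hu) (wd_mem_degSub hv)

lemma coeff_mul_mul_of_mem_degSub_left {p : ℕ} {a : F K X} (ha : a ∈ degSub K X p)
    {x : FreeMonoid X} (hx : wlen X x = p) (g : F K X) (v : FreeMonoid X) :
    (a * g).coeff (x * v) = a.coeff x * g.coeff v :=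
  MonoidAlgebra.coeff_mul_mul_of_uniqueMul fun u _ hu _ h =>
    eq_and_eq_of_mul_eq_mul (by rw [ha u hu, hx]) h

lemma coeff_mul_mul_of_mem_degSub_right {l : ℕ} {g : F K X} (hg : g ∈ degSub K X l)
    {y : FreeMonoid X} (hy : wlen X y = l) (a : F K X) (u : FreeMonoid X) :
    (a * g).coeff (u * y) = a.coeff u * g.coeff y :=
  MonoidAlgebra.coeff_mul_mul_of_uniqueMul fun _ v _ hv h =>
    eq_and_eq_of_mul_eq_mul_right (by rw [hg v hv, hy]) h

lemma lm_mul {p : ℕ} {a b : F K X} (ha : a ∈ degSub K X p) (ha0 : a ≠ 0) (hb0 : b ≠ 0) :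
    a * b ≠ 0 ∧ lm K X (a * b) = lm K X a * lm K X b := by
  classical
  have hlen : wlen X (lm K X a) = p := ha _ (lm_mem_support ha0)
  have hcoeff : (a * b).coeff (lm K X a * lm K X b) ≠ 0 := by
    rw [coeff_mul_mul_of_mem_degSub_left ha hlen]
    exact mul_ne_zero (coeff_lm_ne_zero ha0) (coeff_lm_ne_zero hb0)
  refine ⟨fun h => by simp [h] at hcoeff, lm_eq_of_forall_le (Finsupp.mem_support_iff.mpr hcoeff)
    fun w hw => ?_⟩
  obtain ⟨u, hu, v, hv, rfl⟩ :=
    Finset.mem_mul.mp (MonoidAlgebra.support_coeff_mul_subset a b hw)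
  exact mul_le_mul_of_wlen_eq (by rw [ha u hu, hlen]) (le_lm hu) (le_lm hv)

end Homogeneous

section Slices

variable (K) in
noncomputable def rslice (y : FreeMonoid X) : F K X →ₗ[K] F K X :=
  (MonoidAlgebra.coeffLinearEquiv K).symm.toLinearMap ∘ₗ
    Finsupp.lcomapDomain (· * y) (mul_left_injective y) ∘ₗ
    (MonoidAlgebra.coeffLinearEquiv K).toLinearMap

variable (K) in
noncomputable def lslice (x : FreeMonoid X) : F K X →ₗ[K] F K X :=
  (MonoidAlgebra.coeffLinearEquiv K).symm.toLinearMap ∘ₗ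
    Finsupp.lcomapDomain (x * ·) (mul_right_injective x) ∘ₗ
    (MonoidAlgebra.coeffLinearEquiv K).toLinearMap

@[simp] lemma coeff_rslice (y : FreeMonoid X) (f : F K X) (u : FreeMonoid X) :
    (rslice K y f).coeff u = f.coeff (u * y) := rfl

@[simp] lemma coeff_lslice (x : FreeMonoid X) (f : F K X) (v : FreeMonoid X) :
    (lslice K x f).coeff v = f.coeff (x * v) := rfl

lemma rslice_wd_mul (x y : FreeMonoid X) : rslice K y (wd K X (x * y)) = wd K X x := by
  ext u
  simp [coeff_wd, mul_left_inj]

lemma rslice_mem {l : ℕ} {A : Submodule K (F K X)} {f : F K X}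
    (hf : f ∈ A * degSub K X l) {y : FreeMonoid X} (hy : wlen X y = l) : rslice K y f ∈ A := by
  refine Submodule.mul_induction_on hf (fun a ha g hg => ?_) fun f f' hf hf' => ?_
  · have : rslice K y (a * g) = g.coeff y • a := by
      ext u
      simp [coeff_mul_mul_of_mem_degSub_right hg hy, mul_comm]
    exact this ▸ A.smul_mem _ ha
  · exact (map_add (rslice K y) f f') ▸ A.add_mem hf hf'

lemma lslice_mem {p : ℕ} {B : Submodule K (F K X)} {f : F K X}
    (hf : f ∈ degSub K X p * B) {x : FreeMonoid X} (hx : wlen X x = p) : lslice K x f ∈ B := by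
  refine Submodule.mul_induction_on hf (fun a ha g hg => ?_) fun f f' hf hf' => ?_
  · have : lslice K x (a * g) = a.coeff x • g := by
      ext v
      simp [coeff_mul_mul_of_mem_degSub_left ha hx]
    exact this ▸ B.smul_mem _ hg
  · exact (map_add (lslice K x) f f') ▸ B.add_mem hf hf'

lemma exists_lm_eq_of_mem_mul_degSub {p l : ℕ} {A : Submodule K (F K X)}
    (hA : A ≤ degSub K X p) {f : F K X} (hf : f ∈ A * degSub K X l) (hf0 : f ≠ 0)
    {x y : FreeMonoid X} (hlm : lm K X f = x * y) (hx : wlen X x = p) (hy : wlen X y = l) :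
    ∃ a ∈ A, a ≠ 0 ∧ lm K X a = x := by
  have hax : (rslice K y f).coeff x ≠ 0 := by
    rw [coeff_rslice, ← hlm]
    exact coeff_lm_ne_zero hf0
  refine ⟨rslice K y f, rslice_mem hf hy, fun h => by simp [h] at hax,
    lm_eq_of_forall_le (Finsupp.mem_support_iff.mpr hax) fun u hu => ?_⟩
  refine le_of_mul_le_mul_of_wlen_eq (by rw [hA (rslice_mem hf hy) u hu, hx]) (v := y) (y := y) ?_
  rw [← hlm]
  exact le_lm (by simpa using hu)

lemma exists_lm_eq_of_mem_degSub_mul {p : ℕ} {B : Submodule K (F K X)} {f : F K X}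
    (hf : f ∈ degSub K X p * B) (hf0 : f ≠ 0) {x y : FreeMonoid X} (hlm : lm K X f = x * y)
    (hx : wlen X x = p) : ∃ b ∈ B, b ≠ 0 ∧ lm K X b = y := by
  have hby : (lslice K x f).coeff y ≠ 0 := by
    rw [coeff_lslice, ← hlm]
    exact coeff_lm_ne_zero hf0
  refine ⟨lslice K x f, lslice_mem hf hx, fun h => by simp [h] at hby,
    lm_eq_of_forall_le (Finsupp.mem_support_iff.mpr hby) fun v hv => ?_⟩
  refine le_of_mul_le_mul_left_word (u := x) ?_
  rw [← hlm]
  exact le_lm (by simpa using hv)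

end Slices

namespace IsRedOp

variable {m p l : ℕ} {T T' : F K X →ₗ[K] F K X} {A B : Submodule K (F K X)}

lemma apply_apply (hT : IsRedOp K X m T) (f : F K X) : T (T f) = T f :=
  LinearMap.congr_fun hT.idem f

lemma wlen_eq_of_apply_ne (hT : IsRedOp K X m T) {w : FreeMonoid X}
    (h : T (wd K X w) ≠ wd K X w) : wlen X w = m :=
  not_not.mp fun hw => h (hT.other w hw)

lemma lt_of_mem_support_apply (hT : IsRedOp K X m T) {w : FreeMonoid X}
    (h : T (wd K X w) ≠ wd K X w) {u : FreeMonoid X} (hu : u ∈ (T (wd K X w)).coeff.support) :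
    u < w :=
  ((hT.le w (hT.wlen_eq_of_apply_ne h)).resolve_left h).2 u hu

lemma coeff_apply_wd_eq_zero (hT : IsRedOp K X m T) {w w₀ : FreeMonoid X}
    (h : T (wd K X w) ≠ wd K X w) (hw : w ≤ w₀) : (T (wd K X w)).coeff w₀ = 0 :=
  Finsupp.notMem_support_iff.mp fun hw₀ => (hT.lt_of_mem_support_apply h hw₀).not_ge hw

open Classical in
lemma coeff_apply_eq (hT : IsRedOp K X m T) {f : F K X} {w₀ : FreeMonoid X}
    (h : ∀ w ∈ f.coeff.support, T (wd K X w) ≠ wd K X w → w ≤ w₀) :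
    (T f).coeff w₀ = if T (wd K X w₀) = wd K X w₀ then f.coeff w₀ else 0 := by
  conv_lhs => rw [← sum_smul_wd f, map_finsuppSum, MonoidAlgebra.coeff_finsuppSum]
  rw [Finsupp.sum_apply, Finsupp.sum_eq_single w₀]
  · simp only [map_smul, MonoidAlgebra.coeff_smul_apply, smul_eq_mul]
    split_ifs with hfix
    · simp [hfix, coeff_wd]
    · rw [hT.coeff_apply_wd_eq_zero hfix le_rfl, mul_zero]
  · intro w hw hne
    simp only [map_smul, MonoidAlgebra.coeff_smul_apply, smul_eq_mul]
    by_cases hfix : T (wd K X w) = wd K X w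
    · simp [hfix, coeff_wd, hne]
    · rw [hT.coeff_apply_wd_eq_zero hfix (h w (Finsupp.mem_support_iff.mpr hw) hfix), mul_zero]
  · simp

lemma apply_wd_eq_self_of_mem_support (hT : IsRedOp K X m T) {f : F K X} (hf : T f = f)
    {w : FreeMonoid X} (hw : w ∈ f.coeff.support) : T (wd K X w) = wd K X w := by
  classical
  by_contra hne
  set B := f.coeff.support.filter fun w => T (wd K X w) ≠ wd K X w
  have hB : B.Nonempty := ⟨w, Finset.mem_filter.mpr ⟨hw, hne⟩⟩
  obtain ⟨hw₀, hne₀⟩ := Finset.mem_filter.mp (B.max'_mem hB)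
  have := hT.coeff_apply_eq (w₀ := B.max' hB) fun u hu hne =>
    B.le_max' u (Finset.mem_filter.mpr ⟨hu, hne⟩)
  rw [if_neg hne₀, hf] at this
  exact Finsupp.mem_support_iff.mp hw₀ this

lemma apply_wd_lm_ne_of_apply_eq_zero (hT : IsRedOp K X m T) {f : F K X} (hf : T f = 0)
    (hf0 : f ≠ 0) : T (wd K X (lm K X f)) ≠ wd K X (lm K X f) := by
  intro hfix
  have := hT.coeff_apply_eq (f := f) (w₀ := lm K X f) fun u hu _ => le_lm hu
  rw [if_pos hfix, hf] at this
  exact coeff_lm_ne_zero hf0 this.symm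

lemma apply_wd_ne_iff (hT : IsRedOp K X m T) {w : FreeMonoid X} :
    T (wd K X w) ≠ wd K X w ↔ ∃ k, T k = 0 ∧ k ≠ 0 ∧ lm K X k = w := by
  refine ⟨fun h => ?_, fun ⟨k, hk, hk0, hlm⟩ => hlm ▸ hT.apply_wd_lm_ne_of_apply_eq_zero hk hk0⟩
  have hcoeff : (wd K X w - T (wd K X w)).coeff w = 1 := by
    simp [MonoidAlgebra.coeff_sub, coeff_wd, hT.coeff_apply_wd_eq_zero h le_rfl]
  refine ⟨wd K X w - T (wd K X w), by rw [map_sub, hT.apply_apply, sub_self],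
    fun h0 => by rw [h0] at hcoeff; simp at hcoeff,
    lm_eq_of_forall_le (Finsupp.mem_support_iff.mpr (by rw [hcoeff]; exact one_ne_zero))
      fun u hu => ?_⟩
  rw [MonoidAlgebra.coeff_sub] at hu
  rcases Finset.mem_union.mp (Finsupp.support_sub hu) with hu | hu
  · rw [support_wd, Finset.mem_singleton] at hu
    exact hu.le
  · exact (hT.lt_of_mem_support_apply h hu).le

lemma apply_wd_ne_of_ker_le (hT : IsRedOp K X m T) {m' : ℕ} (hT' : IsRedOp K X m' T')
    (hker : LinearMap.ker T ≤ LinearMap.ker T') {w : FreeMonoid X}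
    (h : T (wd K X w) ≠ wd K X w) : T' (wd K X w) ≠ wd K X w := by
  obtain ⟨k, hk, hk0, hlm⟩ := hT.apply_wd_ne_iff.mp h
  exact hT'.apply_wd_ne_iff.mpr ⟨k, hker hk, hk0, hlm⟩

lemma comp_eq_of_ker_le (hT : IsRedOp K X m T) (hker : LinearMap.ker T ≤ LinearMap.ker T') :
    T' ∘ₗ T = T' := by
  refine LinearMap.ext fun f => ?_
  have : T (T f - f) = 0 := by rw [map_sub, hT.apply_apply, sub_self]
  simpa [sub_eq_zero] using hker this

lemma apply_eq_self_of_ker_le (hT : IsRedOp K X m T) {m' : ℕ} (hT' : IsRedOp K X m' T')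
    (hker : LinearMap.ker T ≤ LinearMap.ker T') {f : F K X} (hf : T' f = f) : T f = f :=
  apply_eq_self_of_forall_mem_support T fun _ hw => not_not.mp fun h =>
    hT.apply_wd_ne_of_ker_le hT' hker h (hT'.apply_wd_eq_self_of_mem_support hf hw)

lemma comp_eq_of_ker_le' (hT : IsRedOp K X m T) {m' : ℕ} (hT' : IsRedOp K X m' T')
    (hker : LinearMap.ker T ≤ LinearMap.ker T') : T ∘ₗ T' = T' :=
  LinearMap.ext fun f => hT.apply_eq_self_of_ker_le hT' hker (hT'.apply_apply f)

lemma comp_comm_of_forall (P : F K X →ₗ[K] F K X) {Q : F K X →ₗ[K] F K X}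
    (hQ : IsRedOp K X m Q) (hfix : ∀ w, Q (wd K X w) = wd K X w → Q (P (wd K X w)) = P (wd K X w))
    (hker : ∀ f, Q f = 0 → Q (P f) = 0) : P ∘ₗ Q = Q ∘ₗ P := by
  refine LinearMap.ext fun f => ?_
  -- The image of `Q` is spanned by its fixed words.
  have himage : Q (P (Q f)) = P (Q f) :=
    apply_eq_apply_of_forall_mem_support (Q ∘ₗ P) P fun w hw =>
      hfix w (hQ.apply_wd_eq_self_of_mem_support (hQ.apply_apply f) hw)
  have hkernel : Q (P (f - Q f)) = 0 := hker _ (by rw [map_sub, hQ.apply_apply, sub_self])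
  rw [map_sub, map_sub, himage, sub_eq_zero] at hkernel
  simpa using hkernel.symm

lemma apply_wd_mul_ne_iff_of_ker_eq_mul (hT : IsRedOp K X m T) (hA : A ≤ degSub K X p)
    (hker : LinearMap.ker T = A * degSub K X l) {x y : FreeMonoid X} (hx : wlen X x = p)
    (hy : wlen X y = l) :
    T (wd K X (x * y)) ≠ wd K X (x * y) ↔ ∃ a ∈ A, a ≠ 0 ∧ lm K X a = x := by
  rw [hT.apply_wd_ne_iff]
  constructor
  · rintro ⟨k, hk, hk0, hlm⟩
    exact exists_lm_eq_of_mem_mul_degSub hA (hker.le hk) hk0 hlm hx hy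
  · rintro ⟨a, ha, ha0, rfl⟩
    obtain ⟨hay0, hlm⟩ := lm_mul (hA ha) ha0 (wd_ne_zero (K := K) y)
    refine ⟨a * wd K X y, ?_, hay0, by rw [hlm, lm_wd]⟩
    exact hker.ge (Submodule.mul_mem_mul ha (wd_mem_degSub hy))

lemma apply_wd_mul_ne_iff_of_ker_eq_degSub_mul (hT : IsRedOp K X m T)
    (hker : LinearMap.ker T = degSub K X p * B) {x y : FreeMonoid X} (hx : wlen X x = p) :
    T (wd K X (x * y)) ≠ wd K X (x * y) ↔ ∃ b ∈ B, b ≠ 0 ∧ lm K X b = y := by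
  rw [hT.apply_wd_ne_iff]
  constructor
  · rintro ⟨k, hk, hk0, hlm⟩
    exact exists_lm_eq_of_mem_degSub_mul (hker.le hk) hk0 hlm hx
  · rintro ⟨b, hb, hb0, rfl⟩
    obtain ⟨hxb0, hlm⟩ := lm_mul (wd_mem_degSub hx) (wd_ne_zero (K := K) x) hb0
    refine ⟨wd K X x * b, ?_, hxb0, by rw [hlm, lm_wd]⟩
    exact hker.ge (Submodule.mul_mem_mul (wd_mem_degSub hx) hb)

lemma exists_apply_wd_mul_eq (hT : IsRedOp K X m T) (hA : A ≤ degSub K X p)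
    (hker : LinearMap.ker T = A * degSub K X l) {x y₀ : FreeMonoid X} (hx : wlen X x = p)
    (hy₀ : wlen X y₀ = l) :
    ∃ g ∈ degSub K X p, ∀ y, wlen X y = l → T (wd K X (x * y)) = g * wd K X y := by
  -- Whether `u y` is fixed does not depend on `y`, so the `y₀`-slice of `T (x y₀)` serves all `y`.
  set g := rslice K y₀ (T (wd K X (x * y₀)))
  have hxg : wd K X x - g ∈ A := by
    rw [← rslice_wd_mul (K := K) x y₀, ← map_sub]
    exact rslice_mem (hker.le (by rw [LinearMap.mem_ker, map_sub, hT.apply_apply, sub_self])) hy₀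
  have hg : g ∈ degSub K X p := by
    simpa using (degSub K X p).sub_mem (wd_mem_degSub hx) (hA hxg)
  refine ⟨g, hg, fun y hy => ?_⟩
  have hfix : T (g * wd K X y) = g * wd K X y := by
    refine apply_eq_self_of_forall_mem_support T fun w hw => ?_
    obtain ⟨u, hu, rfl⟩ := exists_mul_eq_of_mem_support_mul_wd hw
    have hfix₀ : T (wd K X (u * y₀)) = wd K X (u * y₀) :=
      hT.apply_wd_eq_self_of_mem_support (hT.apply_apply _) (by simpa [g] using hu)
    have hu_len : wlen X u = p := hg u hu
    refine not_ne_iff.mp fun h => ?_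
    rw [hT.apply_wd_mul_ne_iff_of_ker_eq_mul hA hker hu_len hy,
      ← hT.apply_wd_mul_ne_iff_of_ker_eq_mul hA hker hu_len hy₀] at h
    exact h hfix₀
  have hkery : T ((wd K X x - g) * wd K X y) = 0 :=
    hker.ge (Submodule.mul_mem_mul hxg (wd_mem_degSub hy))
  calc T (wd K X (x * y)) = T (g * wd K X y) + T ((wd K X x - g) * wd K X y) := by
        rw [← map_add, ← add_mul, add_sub_cancel, wd_mul]
    _ = g * wd K X y := by rw [hfix, hkery, add_zero]

lemma apply_mem_degSub_mul (hT : IsRedOp K X m T) (hA : A ≤ degSub K X p)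
    (hker : LinearMap.ker T = A * degSub K X l) (hB : B ≤ degSub K X l) {f : F K X}
    (hf : f ∈ degSub K X p * B) : T f ∈ degSub K X p * B := by
  refine Submodule.mul_induction_on hf (fun a ha b hb => ?_) fun f f' hf hf' => ?_
  · rw [← sum_smul_wd a, Finsupp.sum_mul, map_finsuppSum]
    refine Submodule.sum_mem _ fun x hx => ?_
    dsimp only
    rw [smul_mul_assoc, map_smul]
    refine Submodule.smul_mem _ _ ?_
    rcases eq_or_ne b 0 with rfl | hb0
    · simp
    obtain ⟨g, hg, hTg⟩ :=
      hT.exists_apply_wd_mul_eq hA hker (ha x hx) (hB hb _ (lm_mem_support hb0))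
    have : T (wd K X x * b) = g * b :=
      apply_eq_apply_of_forall_mem_support (T ∘ₗ LinearMap.mulLeft K (wd K X x))
        (LinearMap.mulLeft K g) fun y hy => by simpa [wd_mul] using hTg y (hB hb y hy)
    exact this ▸ Submodule.mul_mem_mul hg hb
  · exact (map_add T f f') ▸ Submodule.add_mem _ hf hf'

theorem comp_comm_of_ker_eq (hT : IsRedOp K X m T) (hT' : IsRedOp K X m T') (hm : m = p + l)
    (hA : A ≤ degSub K X p) (hB : B ≤ degSub K X l)
    (hker : LinearMap.ker T = A * degSub K X l) (hker' : LinearMap.ker T' = degSub K X p * B) :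
    T ∘ₗ T' = T' ∘ₗ T := by
  refine comp_comm_of_forall T hT' (fun w hw => ?_) fun f hf => ?_
  · by_cases hTw : T (wd K X w) = wd K X w
    · rw [hTw, hw]
    obtain ⟨x, y, rfl, hx, hy⟩ :=
      exists_mul_eq_of_wlen_eq_add (hm ▸ hT.wlen_eq_of_apply_ne hTw)
    obtain ⟨g, hg, hTg⟩ := hT.exists_apply_wd_mul_eq hA hker hx hy
    rw [hTg y hy]
    refine apply_eq_self_of_forall_mem_support T' fun w hw' => ?_
    obtain ⟨u, hu, rfl⟩ := exists_mul_eq_of_mem_support_mul_wd hw'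
    refine not_ne_iff.mp fun h => ?_
    rw [hT'.apply_wd_mul_ne_iff_of_ker_eq_degSub_mul hker' (hg u hu),
      ← hT'.apply_wd_mul_ne_iff_of_ker_eq_degSub_mul hker' hx] at h
    exact h hw
  · exact hker'.ge (hT.apply_mem_degSub_mul hA hker hB (hker'.le hf))

theorem comp_comm_of_ker_eq_inf (hT : IsRedOp K X m T) (hT' : IsRedOp K X m T')
    (hm : m = p + l) (hA : A ≤ degSub K X p) (hB : B ≤ degSub K X l)
    (hker : LinearMap.ker T = A * degSub K X l) (hker' : LinearMap.ker T' = degSub K X p * B)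
    {T₁ U : F K X →ₗ[K] F K X} (hker₁ : LinearMap.ker T ≤ LinearMap.ker T₁)
    (hU : IsRedOp K X m U) (hkerU : LinearMap.ker U = LinearMap.ker T₁ ⊓ LinearMap.ker T') :
    T ∘ₗ U = U ∘ₗ T := by
  have hcomm := hT.comp_comm_of_ker_eq hT' hm hA hB hker hker'
  have hUT' : LinearMap.ker U ≤ LinearMap.ker T' := hkerU ▸ inf_le_right
  refine comp_comm_of_forall T hU (fun w hw => ?_) fun f hf => ?_
  · by_cases hTw : T (wd K X w) = wd K X w
    · rw [hTw, hw]
    by_cases hT'w : T' (wd K X w) = wd K X w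
    · refine hU.apply_eq_self_of_ker_le hT' hUT' ?_
      rw [← LinearMap.comp_apply, ← hcomm, LinearMap.comp_apply, hT'w]
    obtain ⟨x, y, rfl, hx, hy⟩ :=
      exists_mul_eq_of_wlen_eq_add (hm ▸ hT.wlen_eq_of_apply_ne hTw)
    obtain ⟨a, ha, ha0, rfl⟩ := (hT.apply_wd_mul_ne_iff_of_ker_eq_mul hA hker hx hy).mp hTw
    obtain ⟨b, hb, hb0, rfl⟩ := (hT'.apply_wd_mul_ne_iff_of_ker_eq_degSub_mul hker' hx).mp hT'w
    obtain ⟨hab0, hlm⟩ := lm_mul (hA ha) ha0 hb0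
    have habU : a * b ∈ LinearMap.ker U :=
      hkerU ▸ ⟨hker₁ (hker.ge (Submodule.mul_mem_mul ha (hB hb))),
        hker'.ge (Submodule.mul_mem_mul (hA ha) hb)⟩
    exact absurd hw (hlm ▸ hU.apply_wd_lm_ne_of_apply_eq_zero habU hab0)
  · replace hf : f ∈ LinearMap.ker T₁ ⊓ LinearMap.ker T' := hkerU ▸ hf
    refine hkerU.ge ⟨?_, ?_⟩
    · change T₁ (T f) = 0
      rw [← LinearMap.comp_apply, hT.comp_eq_of_ker_le hker₁]
      exact hf.1
    · change T' (T f) = 0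
      rw [← LinearMap.comp_apply, ← hcomm, LinearMap.comp_apply, hf.2, map_zero]

end IsRedOp

section Presentation

variable {N : ℕ} {R : Set (F K X)}

lemma lN_two_mul (N k : ℕ) : lN N (2 * k) = k * N := by
  simp [lN]

lemma lN_two_mul_add_one (N k : ℕ) : lN N (2 * k + 1) = k * N + 1 := by
  simp [lN, Nat.add_div]

lemma lN_le_lN_add_one (hN : 1 ≤ N) (n : ℕ) : lN N n ≤ lN N (n + 1) := by
  obtain ⟨k, rfl | rfl⟩ := Nat.even_or_odd' n
  · rw [lN_two_mul, lN_two_mul_add_one]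
    omega
  · rw [lN_two_mul_add_one, show 2 * k + 1 + 1 = 2 * (k + 1) by ring, lN_two_mul]
    nlinarith

lemma le_lN {n : ℕ} (hn : 2 ≤ n) : N ≤ lN N n := by
  obtain ⟨k, rfl | rfl⟩ := Nat.even_or_odd' n
  · rw [lN_two_mul]
    exact Nat.le_mul_of_pos_left N (by omega)
  · rw [lN_two_mul_add_one]
    have := Nat.le_mul_of_pos_left N (show 0 < k by omega)
    omega

lemma span_mul_le_degSub (hhom : NHomogLC1 K X N R) (i j : ℕ) :
    degSub K X i * Submodule.span K R * degSub K X j ≤ degSub K X (i + N + j) := by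
  grw [Submodule.span_le.mpr fun f hf => (hhom f hf).1, degSub_mul_degSub_le,
    degSub_mul_degSub_le]

lemma idealPiece_le_degSub (hhom : NHomogLC1 K X N R) (a : ℕ) :
    idealPiece K X N R a ≤ degSub K X a := by
  unfold idealPiece
  split_ifs with ha
  · exact bot_le
  refine iSup₂_le fun i hi => ?_
  have := span_mul_le_degSub hhom i (a - N - i)
  rwa [show i + N + (a - N - i) = a by simp at hi; omega] at this

lemma idealPiece_mul_degSub_le (a d : ℕ) :
    idealPiece K X N R a * degSub K X d ≤ idealPiece K X N R (a + d) := by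
  unfold idealPiece
  split_ifs with ha had
  · simp
  · simp
  · omega
  simp only [Submodule.iSup_mul]
  refine iSup₂_le fun i hi => ?_
  have hi' : i ∈ Finset.range (a + d - N + 1) := by simp at hi ⊢; omega
  refine le_trans ?_ (le_iSup₂ (f := fun i _ =>
    degSub K X i * Submodule.span K R * degSub K X (a + d - N - i)) i hi')
  rw [mul_assoc]
  grw [degSub_mul_degSub_le, show a - N - i + d = a + d - N - i by simp at hi; omega]

lemma Jspace_le_degSub (hhom : NHomogLC1 K X N R) {n : ℕ} (hn : 1 ≤ n) :
    Jspace K X N R n ≤ degSub K X (lN N n) := by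
  match n, hn with
  | 1, _ => simp [Jspace, lN]
  | k + 2, _ =>
    have h0 : 0 ∈ Finset.range (lN N (k + 2) - N + 1) := by simp
    refine (biInf_le _ h0).trans ?_
    have := span_mul_le_degSub (K := K) (X := X) hhom 0 (lN N (k + 2) - N - 0)
    rwa [show 0 + N + (lN N (k + 2) - N - 0) = lN N (k + 2) by
      have := le_lN (N := N) (show 2 ≤ k + 2 by omega); omega] at this

lemma ker1_le_ker1_pred (hN : 1 ≤ N) {n m : ℕ} (hn : 1 ≤ n) (hnm : lN N n ≤ m) :
    ker1 K X N R n m ≤ ker1 K X N R (n - 1) m := by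
  have hl : lN N (n - 1) ≤ lN N n := by
    simpa [Nat.sub_add_cancel hn] using lN_le_lN_add_one hN (n - 1)
  unfold ker1
  calc idealPiece K X N R (m - lN N n) * degSub K X (lN N n)
      ≤ idealPiece K X N R (m - lN N n) *
          (degSub K X (lN N n - lN N (n - 1)) * degSub K X (lN N (n - 1))) := by
        grw [← degSub_add_le_mul, Nat.sub_add_cancel hl]
    _ ≤ idealPiece K X N R (m - lN N (n - 1)) * degSub K X (lN N (n - 1)) := by
        grw [← mul_assoc, idealPiece_mul_degSub_le, show m - lN N n + (lN N n - lN N (n - 1)) =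
          m - lN N (n - 1) by omega]

lemma ker2_pred_eq {n m : ℕ} (hn : 1 ≤ n) (hnm : lN N n ≤ m) :
    ker2 K X N R (n - 1) m = degSub K X (m - lN N n) * Jspace K X N R n := by
  rw [ker2, Nat.sub_add_cancel hn, if_neg (by omega)]

end Presentation

end CC

open CC in
theorem stmt17_general (K : Type*) [Field K] (X : Type*) [Fintype X] [LinearOrder X]
    (N : ℕ) (hN : 2 ≤ N) (R : Set (F K X))
    (hhom : NHomogLC1 K X N R)
    (n m : ℕ) (hn : 1 ≤ n) (hnm : lN N n ≤ m)
    (T1n T1p T2p U : F K X →ₗ[K] F K X)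
    (hT1n : IsRedOp K X m T1n) (hkT1n : LinearMap.ker T1n = ker1 K X N R n m)
    (hT1p : IsRedOp K X m T1p) (hkT1p : LinearMap.ker T1p = ker1 K X N R (n - 1) m)
    (hT2p : IsRedOp K X m T2p) (hkT2p : LinearMap.ker T2p = ker2 K X N R (n - 1) m)
    (hU : IsRedOp K X m U)
    (hkU : LinearMap.ker U = LinearMap.ker T1p ⊓ LinearMap.ker T2p) :
    T1n ∘ₗ U = U ∘ₗ T1n ∧
    T1n ∘ₗ T2p = T2p ∘ₗ T1n ∧
    T1n ∘ₗ T1p = T1p ∧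
    T1p ∘ₗ T1n = T1p := by
  have hm : m = (m - lN N n) + lN N n := by omega
  have hA := idealPiece_le_degSub hhom (m - lN N n)
  have hB := Jspace_le_degSub hhom hn
  rw [ker2_pred_eq hn hnm] at hkT2p
  have hker : LinearMap.ker T1n ≤ LinearMap.ker T1p :=
    hkT1n ▸ hkT1p ▸ ker1_le_ker1_pred (by omega) hn hnm
  exact ⟨hT1n.comp_comm_of_ker_eq_inf hT2p hm hA hB hkT1n hkT2p hker hU hkU,
    hT1n.comp_comm_of_ker_eq hT2p hm hA hB hkT1n hkT2p,
    hT1n.comp_eq_of_ker_le' hT1p hker,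
    hT1n.comp_eq_of_ker_le hker⟩

open CC in
/-- Lemma `commute`.  Suppose the reduced `N`-homogeneous presentation
`⟨X|R⟩` is side-confluent.  For all `n ≥ 1` and `m ≥ l_N(n)`, the operators `F_1^{n,m}` and
`F_1^{n−1,m} ∨ F_2^{n−1,m}` commute, where `F_1^{n−1,m} ∨ F_2^{n−1,m}` is the unique
reduction operator relative to `X^{(m)}` with kernel `ker(F_1^{n−1,m}) ∩ ker(F_2^{n−1,m})`.
More precisely, `F_1^{n,m}` commutes with `F_2^{n−1,m}`, and
`F_1^{n,m}∘F_1^{n−1,m} = F_1^{n−1,m}∘F_1^{n,m} = F_1^{n−1,m}`. -/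
theorem stmt17 (K : Type*) [Field K] (X : Type*) [Fintype X] [LinearOrder X]
    (N : ℕ) (hN : 2 ≤ N) (R : Set (F K X))
    (hhom : NHomogLC1 K X N R) (hred : Reduced K X R)
    (hside : SideConfluent K X N R)
    (n m : ℕ) (hn : 1 ≤ n) (hnm : lN N n ≤ m)
    (T1n T1p T2p U : F K X →ₗ[K] F K X)
    (hT1n : IsRedOp K X m T1n) (hkT1n : LinearMap.ker T1n = ker1 K X N R n m)
    (hT1p : IsRedOp K X m T1p) (hkT1p : LinearMap.ker T1p = ker1 K X N R (n - 1) m)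
    (hT2p : IsRedOp K X m T2p) (hkT2p : LinearMap.ker T2p = ker2 K X N R (n - 1) m)
    (hU : IsRedOp K X m U)
    (hkU : LinearMap.ker U = LinearMap.ker T1p ⊓ LinearMap.ker T2p) :
    T1n ∘ₗ U = U ∘ₗ T1n ∧
    T1n ∘ₗ T2p = T2p ∘ₗ T1n ∧
    T1n ∘ₗ T1p = T1p ∧
    T1p ∘ₗ T1n = T1p :=
  stmt17_general K X N hN R hhom n m hn hnm T1n T1p T2p U hT1n hkT1n hT1p hkT1p hT2p hkT2p hU hkU
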